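/- Let (A, μ) be an alternative algebra over a field k of characteristic 0 and α : A → A an algebra morphism (α(xy) = α(x)α(y)). Define the commutator [x,y] = xy − yx and the triple product [x,y,z]_α = α(2[[x,y],z] − [[z,x],y] − [[y,z],x]). Then A⁻_α = (A, [·,·,·]_α, α) is a multiplicative Hom-Lie triple system. -/
import Mathlib


/-- The commutator `[x,y] = xy − yx` of a bilinear multiplication. -/
def comm' {k A : Type*} [Field k] [AddCommGroup A] [Module k A]
    (mul : A →ₗ[k] A →ₗ[k] A) (x y : A) : A :=
  mul x y - mul y x

/-- The twisted triple product `[x,y,z]_α = α(2[[x,y],z] − [[z,x],y] − [[y,z],x])`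
built from the commutator of `mul`. -/
def commTripleTwist {k A : Type*} [Field k] [AddCommGroup A] [Module k A]
    (mul : A →ₗ[k] A →ₗ[k] A) (α : A →ₗ[k] A) (x y z : A) : A :=
  α ((2 : ℤ) • comm' mul (comm' mul x y) z - comm' mul (comm' mul z x) y
      - comm' mul (comm' mul y z) x)

/-- The associator `as(x,y,z) = (xy)z − x(yz)` of `mul`. -/
def associator' {k A : Type*} [Field k] [AddCommGroup A] [Module k A]
    (mul : A →ₗ[k] A →ₗ[k] A) (x y z : A) : A :=
  mul (mul x y) z - mul x (mul y z)

/-! ### Auxiliary machinery for the proof -/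

/-- The untwisted triple product `P(x,y,z) = 2[[x,y],z] − [[z,x],y] − [[y,z],x]`. -/
def ltsP {k A : Type*} [Field k] [AddCommGroup A] [Module k A]
    (mul : A →ₗ[k] A →ₗ[k] A) (x y z : A) : A :=
  (2 : ℤ) • comm' mul (comm' mul x y) z - comm' mul (comm' mul z x) y
      - comm' mul (comm' mul y z) x

/-- The inner derivation `D_{x,y} = [L_x,L_y] + [L_x,R_y] + [R_x,R_y]` of an
alternative algebra, applied to `z`. -/
def ltsD {k A : Type*} [Field k] [AddCommGroup A] [Module k A]
    (mul : A →ₗ[k] A →ₗ[k] A) (x y z : A) : A :=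
  mul x (mul y z) - mul y (mul x z) + mul x (mul z y) - mul (mul x z) y
      + mul (mul z y) x - mul (mul z x) y

lemma asw12 {k A : Type*} [Field k] [AddCommGroup A] [Module k A]
    (mul : A →ₗ[k] A →ₗ[k] A)
    (halt : ∀ (σ : Equiv.Perm (Fin 3)) (v : Fin 3 → A),
      associator' mul (v 0) (v 1) (v 2)
        = (Equiv.Perm.sign σ : ℤ) • associator' mul (v (σ 0)) (v (σ 1)) (v (σ 2)))
    (a b c : A) : associator' mul a b c = - associator' mul b a c := by
  have h := halt (Equiv.swap 0 1) ![a, b, c]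
  simpa [Equiv.swap_apply_def, Fin.ext_iff] using h

lemma asw23 {k A : Type*} [Field k] [AddCommGroup A] [Module k A]
    (mul : A →ₗ[k] A →ₗ[k] A)
    (halt : ∀ (σ : Equiv.Perm (Fin 3)) (v : Fin 3 → A),
      associator' mul (v 0) (v 1) (v 2)
        = (Equiv.Perm.sign σ : ℤ) • associator' mul (v (σ 0)) (v (σ 1)) (v (σ 2)))
    (a b c : A) : associator' mul a b c = - associator' mul a c b := by
  have h := halt (Equiv.swap 1 2) ![a, b, c]
  simpa [Equiv.swap_apply_def, Fin.ext_iff] using h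

set_option maxHeartbeats 2000000 in

lemma ltsP_eq {k A : Type*} [Field k] [AddCommGroup A] [Module k A]
    (mul : A →ₗ[k] A →ₗ[k] A)
    (a12 : ∀ a b c : A, associator' mul a b c = - associator' mul b a c)
    (a23 : ∀ a b c : A, associator' mul a b c = - associator' mul a c b)
    (x y z : A) :
    ltsP mul x y z = comm' mul (comm' mul x y) z + (2 : ℤ) • ltsD mul x y z := by

  have e1 : (associator' mul y x z + associator' mul x y z) = 0 := by rw [a12 x y z]; abel
  have e2 : (associator' mul x z y + associator' mul x y z) = 0 := by rw [a23 x y z]; abel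
  have e3 : (associator' mul z x y + associator' mul x z y) = 0 := by rw [a12 x z y]; abel
  have e4 : (associator' mul z y x + associator' mul y z x) = 0 := by rw [a12 y z x]; abel
  have key : ltsP mul x y z - (comm' mul (comm' mul x y) z + (2 : ℤ) • ltsD mul x y z) = (-1 : ℤ) • (associator' mul y x z + associator' mul x y z) + (2 : ℤ) • (associator' mul x z y + associator' mul x y z) + (1 : ℤ) • (associator' mul z x y + associator' mul x z y) + (-1 : ℤ) • (associator' mul z y x + associator' mul y z x) := by
    simp only [ltsP, ltsD, comm', associator', two_smul, map_add, map_sub, LinearMap.add_apply, LinearMap.sub_apply, smul_add, smul_sub, smul_neg]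
    abel
  rw [e1, e2, e3, e4] at key
  simp only [smul_zero, add_zero, zero_add] at key
  exact sub_eq_zero.mp key

lemma ltsD_leibniz {k A : Type*} [Field k] [AddCommGroup A] [Module k A]
    (mul : A →ₗ[k] A →ₗ[k] A)
    (a12 : ∀ a b c : A, associator' mul a b c = - associator' mul b a c)
    (a23 : ∀ a b c : A, associator' mul a b c = - associator' mul a c b)
    (x y a b : A) :
    ltsD mul x y (mul a b) = mul (ltsD mul x y a) b + mul a (ltsD mul x y b) := by

  have e1 : (associator' mul (mul y a) x b + associator' mul x (mul y a) b) = 0 := by rw [a12 x (mul y a) b]; abel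
  have e2 : (associator' mul y x (mul a b) + associator' mul x y (mul a b)) = 0 := by rw [a12 x y (mul a b)]; abel
  have e3 : (associator' mul x (mul a b) y + associator' mul x y (mul a b)) = 0 := by rw [a23 x y (mul a b)]; abel
  have e4 : (associator' mul y (mul x a) b + associator' mul (mul x a) y b) = 0 := by rw [a12 (mul x a) y b]; abel
  have e5 : (associator' mul (mul a y) x b + associator' mul x (mul a y) b) = 0 := by rw [a12 x (mul a y) b]; abel
  have e6 : (associator' mul a x (mul y b) + associator' mul x a (mul y b)) = 0 := by rw [a12 x a (mul y b)]; abel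
  have e7 : (associator' mul y (mul x b) a + associator' mul (mul x b) y a) = 0 := by rw [a12 (mul x b) y a]; abel
  have e8 : (associator' mul (mul x b) a y + associator' mul (mul x b) y a) = 0 := by rw [a23 (mul x b) y a]; abel
  have e9 : (associator' mul a (mul x b) y + associator' mul (mul x b) a y) = 0 := by rw [a12 (mul x b) a y]; abel
  have e10 : (associator' mul y (mul a b) x + associator' mul y x (mul a b)) = 0 := by rw [a23 y x (mul a b)]; abel
  have e11 : (associator' mul y a (mul x b) + associator' mul y (mul x b) a) = 0 := by rw [a23 y (mul x b) a]; abel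
  have e12 : (associator' mul (mul y a) b x + associator' mul (mul y a) x b) = 0 := by rw [a23 (mul y a) x b]; abel
  have e13 : (associator' mul a y (mul x b) + associator' mul y a (mul x b)) = 0 := by rw [a12 y a (mul x b)]; abel
  have e14 : (associator' mul a y (mul b x) + associator' mul y a (mul b x)) = 0 := by rw [a12 y a (mul b x)]; abel
  have e15 : (associator' mul (mul a x) b y + associator' mul (mul a x) y b) = 0 := by rw [a23 (mul a x) y b]; abel
  have e16 : (associator' mul a (mul b y) x + associator' mul a x (mul b y)) = 0 := by rw [a23 a x (mul b y)]; abel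
  have e17 : (associator' mul a (mul b x) y + associator' mul a y (mul b x)) = 0 := by rw [a23 a y (mul b x)]; abel
  have i18 : associator' mul a y b + associator' mul y a b = 0 := by rw [a12 y a b]; abel
  have e19 : (mul x (associator' mul a y b + associator' mul y a b)) = 0 := by rw [i18]; exact map_zero _
  have e20 : (mul (associator' mul a y b + associator' mul y a b) x) = 0 := by rw [i18]; simp
  have i21 : associator' mul a b y + associator' mul a y b = 0 := by rw [a23 a y b]; abel
  have e22 : (mul (associator' mul a b y + associator' mul a y b) x) = 0 := by rw [i21]; simp
  have i23 : associator' mul a x b + associator' mul x a b = 0 := by rw [a12 x a b]; abel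
  have e24 : (mul y (associator' mul a x b + associator' mul x a b)) = 0 := by rw [i23]; exact map_zero _
  have i25 : associator' mul a b x + associator' mul a x b = 0 := by rw [a23 a x b]; abel
  have e26 : (mul y (associator' mul a b x + associator' mul a x b)) = 0 := by rw [i25]; exact map_zero _
  have e27 : (mul (associator' mul a b x + associator' mul a x b) y) = 0 := by rw [i25]; simp
  have key : ltsD mul x y (mul a b) - (mul (ltsD mul x y a) b + mul a (ltsD mul x y b)) = (-1 : ℤ) • (associator' mul (mul y a) x b + associator' mul x (mul y a) b) + (1 : ℤ) • (associator' mul y x (mul a b) + associator' mul x y (mul a b)) + (-1 : ℤ) • (associator' mul x (mul a b) y + associator' mul x y (mul a b)) + (1 : ℤ) • (associator' mul y (mul x a) b + associator' mul (mul x a) y b) + (-1 : ℤ) • (associator' mul (mul a y) x b + associator' mul x (mul a y) b) + (1 : ℤ) • (associator' mul a x (mul y b) + associator' mul x a (mul y b)) + (-1 : ℤ) • (associator' mul y (mul x b) a + associator' mul (mul x b) y a) + (1 : ℤ) • (associator' mul (mul x b) a y + associator' mul (mul x b) y a) + (-1 : ℤ) • (associator' mul a (mul x b) y + associator' mul (mul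 x b) a y) + (-1 : ℤ) • (associator' mul y (mul a b) x + associator' mul y x (mul a b)) + (1 : ℤ) • (associator' mul y a (mul x b) + associator' mul y (mul x b) a) + (1 : ℤ) • (associator' mul (mul y a) b x + associator' mul (mul y a) x b) + (-1 : ℤ) • (associator' mul a y (mul x b) + associator' mul y a (mul x b)) + (1 : ℤ) • (associator' mul a y (mul b x) + associator' mul y a (mul b x)) + (1 : ℤ) • (associator' mul (mul a x) b y + associator' mul (mul a x) y b) + (1 : ℤ) • (associator' mul a (mul b y) x + associator' mul a x (mul b y)) + (-1 : ℤ) • (associator' mul a (mul b x) y + associator' mul a y (mul b x)) + (-1 : ℤ) • (mul x (associator' mul a y b + associator' mul y a b)) + (-1 : ℤ) • (mul (associator' mul a y b + associator' mul y a b) x) + (1 : ℤ) • (mul (associator' mul a b y + associator' mul a y b) x) + (1 : ℤ) • (mul y (associator' mul a x b + associator' mul x a b)) + (-1 : ℤ) • (mul y (associator' mul a b x + associator' mul a x b)) + (-1 : ℤ) • (mul (associator' mul a b x + associator' mul a x b) y) := by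
    simp only [ltsP, ltsD, comm', associator', two_smul, map_add, map_sub, LinearMap.add_apply, LinearMap.sub_apply, smul_add, smul_sub, smul_neg]
    abel
  rw [e1, e2, e3, e4, e5, e6, e7, e8, e9, e10, e11, e12, e13, e14, e15, e16, e17, e19, e20, e22, e24, e26, e27] at key
  simp only [smul_zero, add_zero, zero_add] at key
  exact sub_eq_zero.mp key

set_option maxHeartbeats 4000000 in
lemma ltsP_ad {k A : Type*} [Field k] [AddCommGroup A] [Module k A]
    (mul : A →ₗ[k] A →ₗ[k] A)
    (a12 : ∀ a b c : A, associator' mul a b c = - associator' mul b a c)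
    (a23 : ∀ a b c : A, associator' mul a b c = - associator' mul a c b)
    (c u v w : A) :
    comm' mul c (ltsP mul u v w) = ltsP mul (comm' mul c u) v w + ltsP mul u (comm' mul c v) w + ltsP mul u v (comm' mul c w) := by

  have e1 : (associator' mul v (mul c u) w + associator' mul (mul c u) v w) = 0 := by rw [a12 (mul c u) v w]; abel
  have e2 : (associator' mul (mul c u) w v + associator' mul (mul c u) v w) = 0 := by rw [a23 (mul c u) v w]; abel
  have e3 : (associator' mul (mul u v) c w + associator' mul c (mul u v) w) = 0 := by rw [a12 c (mul u v) w]; abel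
  have e4 : (associator' mul c w (mul u v) + associator' mul c (mul u v) w) = 0 := by rw [a23 c (mul u v) w]; abel
  have e5 : (associator' mul u c (mul v w) + associator' mul c u (mul v w)) = 0 := by rw [a12 c u (mul v w)]; abel
  have e6 : (associator' mul c (mul v w) u + associator' mul c u (mul v w)) = 0 := by rw [a23 c u (mul v w)]; abel
  have e7 : (associator' mul w (mul c u) v + associator' mul (mul c u) w v) = 0 := by rw [a12 (mul c u) w v]; abel
  have e8 : (associator' mul c v (mul u w) + associator' mul c (mul u w) v) = 0 := by rw [a23 c (mul u w) v]; abel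
  have e9 : (associator' mul u c (mul w v) + associator' mul c u (mul w v)) = 0 := by rw [a12 c u (mul w v)]; abel
  have e10 : (associator' mul c (mul w v) u + associator' mul c u (mul w v)) = 0 := by rw [a23 c u (mul w v)]; abel
  have e11 : (associator' mul u (mul c v) w + associator' mul (mul c v) u w) = 0 := by rw [a12 (mul c v) u w]; abel
  have e12 : (associator' mul (mul c v) w u + associator' mul (mul c v) u w) = 0 := by rw [a23 (mul c v) u w]; abel
  have e13 : (associator' mul (mul v u) c w + associator' mul c (mul v u) w) = 0 := by rw [a12 c (mul v u) w]; abel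
  have e14 : (associator' mul c w (mul v u) + associator' mul c (mul v u) w) = 0 := by rw [a23 c (mul v u) w]; abel
  have e15 : (associator' mul v c (mul u w) + associator' mul c v (mul u w)) = 0 := by rw [a12 c v (mul u w)]; abel
  have e16 : (associator' mul w (mul c v) u + associator' mul (mul c v) w u) = 0 := by rw [a12 (mul c v) w u]; abel
  have e17 : (associator' mul v c (mul w u) + associator' mul c v (mul w u)) = 0 := by rw [a12 c v (mul w u)]; abel
  have e18 : (associator' mul c (mul w u) v + associator' mul c v (mul w u)) = 0 := by rw [a23 c v (mul w u)]; abel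
  have e19 : (associator' mul u (mul c w) v + associator' mul (mul c w) u v) = 0 := by rw [a12 (mul c w) u v]; abel
  have e20 : (associator' mul (mul c w) v u + associator' mul (mul c w) u v) = 0 := by rw [a23 (mul c w) u v]; abel
  have e21 : (associator' mul (mul w u) c v + associator' mul c (mul w u) v) = 0 := by rw [a12 c (mul w u) v]; abel
  have e22 : (associator' mul v (mul c w) u + associator' mul (mul c w) v u) = 0 := by rw [a12 (mul c w) v u]; abel
  have e23 : (associator' mul (mul w v) c u + associator' mul c (mul w v) u) = 0 := by rw [a12 c (mul w v) u]; abel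
  have e24 : (associator' mul v (mul u c) w + associator' mul (mul u c) v w) = 0 := by rw [a12 (mul u c) v w]; abel
  have e25 : (associator' mul (mul u c) w v + associator' mul (mul u c) v w) = 0 := by rw [a23 (mul u c) v w]; abel
  have e26 : (associator' mul u w (mul c v) + associator' mul u (mul c v) w) = 0 := by rw [a23 u (mul c v) w]; abel
  have e27 : (associator' mul w (mul u c) v + associator' mul (mul u c) w v) = 0 := by rw [a12 (mul u c) w v]; abel
  have e28 : (associator' mul u v (mul c w) + associator' mul u (mul c w) v) = 0 := by rw [a23 u (mul c w) v]; abel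
  have e29 : (associator' mul u (mul w v) c + associator' mul u c (mul w v)) = 0 := by rw [a23 u c (mul w v)]; abel
  have e30 : (associator' mul (mul u v) w c + associator' mul (mul u v) c w) = 0 := by rw [a23 (mul u v) c w]; abel
  have e31 : (associator' mul (mul v c) u w + associator' mul u (mul v c) w) = 0 := by rw [a12 u (mul v c) w]; abel
  have e32 : (associator' mul u w (mul v c) + associator' mul u (mul v c) w) = 0 := by rw [a23 u (mul v c) w]; abel
  have e33 : (associator' mul v u (mul c w) + associator' mul u v (mul c w)) = 0 := by rw [a12 u v (mul c w)]; abel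
  have e34 : (associator' mul u (mul w c) v + associator' mul u v (mul w c)) = 0 := by rw [a23 u v (mul w c)]; abel
  have e35 : (associator' mul (mul w c) u v + associator' mul u (mul w c) v) = 0 := by rw [a12 u (mul w c) v]; abel
  have e36 : (associator' mul w u (mul c v) + associator' mul u w (mul c v)) = 0 := by rw [a12 u w (mul c v)]; abel
  have e37 : (associator' mul (mul w v) u c + associator' mul u (mul w v) c) = 0 := by rw [a12 u (mul w v) c]; abel
  have e38 : (associator' mul w u (mul v c) + associator' mul u w (mul v c)) = 0 := by rw [a12 u w (mul v c)]; abel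
  have e39 : (associator' mul (mul v c) w u + associator' mul (mul v c) u w) = 0 := by rw [a23 (mul v c) u w]; abel
  have e40 : (associator' mul v w (mul c u) + associator' mul v (mul c u) w) = 0 := by rw [a23 v (mul c u) w]; abel
  have e41 : (associator' mul w (mul v c) u + associator' mul (mul v c) w u) = 0 := by rw [a12 (mul v c) w u]; abel
  have e42 : (associator' mul v (mul w u) c + associator' mul v c (mul w u)) = 0 := by rw [a23 v c (mul w u)]; abel
  have e43 : (associator' mul (mul v u) w c + associator' mul (mul v u) c w) = 0 := by rw [a23 (mul v u) c w]; abel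
  have e44 : (associator' mul v w (mul u c) + associator' mul v (mul u c) w) = 0 := by rw [a23 v (mul u c) w]; abel
  have e45 : (associator' mul v (mul w c) u + associator' mul v u (mul w c)) = 0 := by rw [a23 v u (mul w c)]; abel
  have e46 : (associator' mul (mul w c) v u + associator' mul v (mul w c) u) = 0 := by rw [a12 v (mul w c) u]; abel
  have e47 : (associator' mul w v (mul c u) + associator' mul v w (mul c u)) = 0 := by rw [a12 v w (mul c u)]; abel
  have e48 : (associator' mul (mul w u) v c + associator' mul v (mul w u) c) = 0 := by rw [a12 v (mul w u) c]; abel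
  have e49 : (associator' mul w v (mul u c) + associator' mul v w (mul u c)) = 0 := by rw [a12 v w (mul u c)]; abel
  have i50 : associator' mul u w v + associator' mul u v w = 0 := by rw [a23 u v w]; abel
  have e51 : (mul c (associator' mul u w v + associator' mul u v w)) = 0 := by rw [i50]; exact map_zero _
  have e52 : (mul (associator' mul u w v + associator' mul u v w) c) = 0 := by rw [i50]; simp
  have i53 : associator' mul w u v + associator' mul u w v = 0 := by rw [a12 u w v]; abel
  have e54 : (mul c (associator' mul w u v + associator' mul u w v)) = 0 := by rw [i53]; exact map_zero _
  have e55 : (mul (associator' mul w u v + associator' mul u w v) c) = 0 := by rw [i53]; simp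
  have i56 : associator' mul v w u + associator' mul v u w = 0 := by rw [a23 v u w]; abel
  have e57 : (mul c (associator' mul v w u + associator' mul v u w)) = 0 := by rw [i56]; exact map_zero _
  have e58 : (mul (associator' mul v w u + associator' mul v u w) c) = 0 := by rw [i56]; simp
  have i59 : associator' mul w v u + associator' mul v w u = 0 := by rw [a12 v w u]; abel
  have e60 : (mul c (associator' mul w v u + associator' mul v w u)) = 0 := by rw [i59]; exact map_zero _
  have e61 : (mul (associator' mul w v u + associator' mul v w u) c) = 0 := by rw [i59]; simp
  have i62 : associator' mul v c w + associator' mul c v w = 0 := by rw [a12 c v w]; abel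
  have e63 : (mul u (associator' mul v c w + associator' mul c v w)) = 0 := by rw [i62]; exact map_zero _
  have e64 : (mul (associator' mul v c w + associator' mul c v w) u) = 0 := by rw [i62]; simp
  have i65 : associator' mul c w v + associator' mul c v w = 0 := by rw [a23 c v w]; abel
  have e66 : (mul u (associator' mul c w v + associator' mul c v w)) = 0 := by rw [i65]; exact map_zero _
  have e67 : (mul (associator' mul c w v + associator' mul c v w) u) = 0 := by rw [i65]; simp
  have i68 : associator' mul w c v + associator' mul c w v = 0 := by rw [a12 c w v]; abel
  have e69 : (mul (associator' mul w c v + associator' mul c w v) u) = 0 := by rw [i68]; simp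
  have i70 : associator' mul v w c + associator' mul v c w = 0 := by rw [a23 v c w]; abel
  have e71 : (mul (associator' mul v w c + associator' mul v c w) u) = 0 := by rw [i70]; simp
  have i72 : associator' mul w v c + associator' mul v w c = 0 := by rw [a12 v w c]; abel
  have e73 : (mul (associator' mul w v c + associator' mul v w c) u) = 0 := by rw [i72]; simp
  have i74 : associator' mul u c w + associator' mul c u w = 0 := by rw [a12 c u w]; abel
  have e75 : (mul v (associator' mul u c w + associator' mul c u w)) = 0 := by rw [i74]; exact map_zero _
  have e76 : (mul (associator' mul u c w + associator' mul c u w) v) = 0 := by rw [i74]; simp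
  have i77 : associator' mul c w u + associator' mul c u w = 0 := by rw [a23 c u w]; abel
  have e78 : (mul v (associator' mul c w u + associator' mul c u w)) = 0 := by rw [i77]; exact map_zero _
  have e79 : (mul (associator' mul c w u + associator' mul c u w) v) = 0 := by rw [i77]; simp
  have i80 : associator' mul w c u + associator' mul c w u = 0 := by rw [a12 c w u]; abel
  have e81 : (mul (associator' mul w c u + associator' mul c w u) v) = 0 := by rw [i80]; simp
  have i82 : associator' mul u w c + associator' mul u c w = 0 := by rw [a23 u c w]; abel
  have e83 : (mul (associator' mul u w c + associator' mul u c w) v) = 0 := by rw [i82]; simp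
  have i84 : associator' mul w u c + associator' mul u w c = 0 := by rw [a12 u w c]; abel
  have e85 : (mul (associator' mul w u c + associator' mul u w c) v) = 0 := by rw [i84]; simp
  have key : comm' mul c (ltsP mul u v w) - (ltsP mul (comm' mul c u) v w + ltsP mul u (comm' mul c v) w + ltsP mul u v (comm' mul c w)) = (3 : ℤ) • (associator' mul v (mul c u) w + associator' mul (mul c u) v w) + (-5 : ℤ) • (associator' mul (mul c u) w v + associator' mul (mul c u) v w) + (3 : ℤ) • (associator' mul (mul u v) c w + associator' mul c (mul u v) w) + (-3 : ℤ) • (associator' mul c w (mul u v) + associator' mul c (mul u v) w) + (3 : ℤ) • (associator' mul u c (mul v w) + associator' mul c u (mul v w)) + (-6 : ℤ) • (associator' mul c (mul v w) u + associator' mul c u (mul v w)) + (-2 : ℤ) • (associator' mul w (mul c u) v + associator' mul (mul c u) w v) + (6 : ℤ) • (associator' mul c v (mul u w) + associator' mul c (mul u w) v) + (3 : ℤ) • (associator' mul u c (mul w v) + associator' mul c u (mul w v)) + (-9 : ℤ) • (associator' mul c (mul w v) u + associator' mul c u (mul w v)) + (-3 : ℤ) • (associator' mul u (mul c v) w + associator'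 mul (mul c v) u w) + (5 : ℤ) • (associator' mul (mul c v) w u + associator' mul (mul c v) u w) + (-3 : ℤ) • (associator' mul (mul v u) c w + associator' mul c (mul v u) w) + (3 : ℤ) • (associator' mul c w (mul v u) + associator' mul c (mul v u) w) + (-3 : ℤ) • (associator' mul v c (mul u w) + associator' mul c v (mul u w)) + (2 : ℤ) • (associator' mul w (mul c v) u + associator' mul (mul c v) w u) + (-3 : ℤ) • (associator' mul v c (mul w u) + associator' mul c v (mul w u)) + (9 : ℤ) • (associator' mul c (mul w u) v + associator' mul c v (mul w u)) + (-3 : ℤ) • (associator' mul u (mul c w) v + associator' mul (mul c w) u v) + (-2 : ℤ) • (associator' mul (mul c w) v u + associator' mul (mul c w) u v) + (-3 : ℤ) • (associator' mul (mul w u) c v + associator' mul c (mul w u) v) + (7 : ℤ) • (associator' mul v (mul c w) u + associator' mul (mul c w) v u) + (3 : ℤ) • (associator' mul (mul w v) c u + associator' mul c (mul w v) u) + (-3 : ℤ) • (associator' mul v (mul u c) w + associator' mul (mul u c) v w) + (5 : ℤ) • (associator' mul (mul u c) w v + associator' mul (mul u c) v w) + (1 : ℤ) • (associator' mul u w (mul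 c v) + associator' mul u (mul c v) w) + (2 : ℤ) • (associator' mul w (mul u c) v + associator' mul (mul u c) w v) + (-4 : ℤ) • (associator' mul u v (mul c w) + associator' mul u (mul c w) v) + (3 : ℤ) • (associator' mul u (mul w v) c + associator' mul u c (mul w v)) + (-3 : ℤ) • (associator' mul (mul u v) w c + associator' mul (mul u v) c w) + (3 : ℤ) • (associator' mul (mul v c) u w + associator' mul u (mul v c) w) + (-1 : ℤ) • (associator' mul u w (mul v c) + associator' mul u (mul v c) w) + (2 : ℤ) • (associator' mul v u (mul c w) + associator' mul u v (mul c w)) + (-1 : ℤ) • (associator' mul u (mul w c) v + associator' mul u v (mul w c)) + (2 : ℤ) • (associator' mul (mul w c) u v + associator' mul u (mul w c) v) + (-2 : ℤ) • (associator' mul w u (mul c v) + associator' mul u w (mul c v)) + (-3 : ℤ) • (associator' mul (mul w v) u c + associator' mul u (mul w v) c) + (2 : ℤ) • (associator' mul w u (mul v c) + associator' mul u w (mul v c)) + (-5 : ℤ) • (associator' mul (mul v c) w u + associator' mul (mul v c) u w) + (-1 : ℤ) • (associator' mul v w (mul c u) + associator' mul v (mul c u) w) + (-2 : ℤ) • (associator'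 mul w (mul v c) u + associator' mul (mul v c) w u) + (-3 : ℤ) • (associator' mul v (mul w u) c + associator' mul v c (mul w u)) + (3 : ℤ) • (associator' mul (mul v u) w c + associator' mul (mul v u) c w) + (1 : ℤ) • (associator' mul v w (mul u c) + associator' mul v (mul u c) w) + (1 : ℤ) • (associator' mul v (mul w c) u + associator' mul v u (mul w c)) + (-2 : ℤ) • (associator' mul (mul w c) v u + associator' mul v (mul w c) u) + (2 : ℤ) • (associator' mul w v (mul c u) + associator' mul v w (mul c u)) + (3 : ℤ) • (associator' mul (mul w u) v c + associator' mul v (mul w u) c) + (-2 : ℤ) • (associator' mul w v (mul u c) + associator' mul v w (mul u c)) + (2 : ℤ) • (mul c (associator' mul u w v + associator' mul u v w)) + (1 : ℤ) • (mul (associator' mul u w v + associator' mul u v w) c) + (5 : ℤ) • (mul c (associator' mul w u v + associator' mul u w v)) + (-2 : ℤ) • (mul (associator' mul w u v + associator' mul u w v) c) + (-2 : ℤ) • (mul c (associator' mul v w u + associator' mul v u w)) + (-1 : ℤ) • (mul (associator' mul v w u + associator' mul v u w) c) + (-5 : ℤ) • (mul c (associator' mul w v u + associator' mul v w u)) + (2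 : ℤ) • (mul (associator' mul w v u + associator' mul v w u) c) + (3 : ℤ) • (mul u (associator' mul v c w + associator' mul c v w)) + (3 : ℤ) • (mul (associator' mul v c w + associator' mul c v w) u) + (-6 : ℤ) • (mul u (associator' mul c w v + associator' mul c v w)) + (-9 : ℤ) • (mul (associator' mul c w v + associator' mul c v w) u) + (3 : ℤ) • (mul (associator' mul w c v + associator' mul c w v) u) + (3 : ℤ) • (mul (associator' mul v w c + associator' mul v c w) u) + (-3 : ℤ) • (mul (associator' mul w v c + associator' mul v w c) u) + (-3 : ℤ) • (mul v (associator' mul u c w + associator' mul c u w)) + (-3 : ℤ) • (mul (associator' mul u c w + associator' mul c u w) v) + (6 : ℤ) • (mul v (associator' mul c w u + associator' mul c u w)) + (9 : ℤ) • (mul (associator' mul c w u + associator' mul c u w) v) + (-3 : ℤ) • (mul (associator' mul w c u + associator' mul c w u) v) + (-3 : ℤ) • (mul (associator' mul u w c + associator' mul u c w) v) + (3 : ℤ) • (mul (associator' mul w u c + associator' mul u w c) v) := by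
    simp only [ltsP, ltsD, comm', associator', two_smul, map_add, map_sub, LinearMap.add_apply, LinearMap.sub_apply, smul_add, smul_sub, smul_neg]
    abel
  rw [e1, e2, e3, e4, e5, e6, e7, e8, e9, e10, e11, e12, e13, e14, e15, e16, e17, e18, e19, e20, e21, e22, e23, e24, e25, e26, e27, e28, e29, e30, e31, e32, e33, e34, e35, e36, e37, e38, e39, e40, e41, e42, e43, e44, e45, e46, e47, e48, e49, e51, e52, e54, e55, e57, e58, e60, e61, e63, e64, e66, e67, e69, e71, e73, e75, e76, e78, e79, e81, e83, e85] at key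
  simp only [smul_zero, add_zero, zero_add] at key
  exact sub_eq_zero.mp key

lemma ltsP_antisym {k A : Type*} [Field k] [AddCommGroup A] [Module k A]
    (mul : A →ₗ[k] A →ₗ[k] A) (u v w : A) : ltsP mul u v w = - ltsP mul v u w := by
  simp only [ltsP, comm', two_smul, map_add, map_sub, LinearMap.add_apply,
    LinearMap.sub_apply]
  abel

lemma ltsP_jacobi {k A : Type*} [Field k] [AddCommGroup A] [Module k A]
    (mul : A →ₗ[k] A →ₗ[k] A) (u v w : A) :
    ltsP mul u v w + ltsP mul w u v + ltsP mul v w u = 0 := by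
  simp only [ltsP, comm', two_smul, map_add, map_sub, LinearMap.add_apply,
    LinearMap.sub_apply]
  abel

lemma ltsP_addsmul1 {k A : Type*} [Field k] [AddCommGroup A] [Module k A]
    (mul : A →ₗ[k] A →ₗ[k] A) (a b v w : A) :
    ltsP mul (a + (2 : ℤ) • b) v w = ltsP mul a v w + (2 : ℤ) • ltsP mul b v w := by
  simp only [ltsP, comm', two_smul, map_add, map_sub, LinearMap.add_apply,
    LinearMap.sub_apply]
  abel

lemma ltsP_addsmul2 {k A : Type*} [Field k] [AddCommGroup A] [Module k A]
    (mul : A →ₗ[k] A →ₗ[k] A) (a b u w : A) :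
    ltsP mul u (a + (2 : ℤ) • b) w = ltsP mul u a w + (2 : ℤ) • ltsP mul u b w := by
  simp only [ltsP, comm', two_smul, map_add, map_sub, LinearMap.add_apply,
    LinearMap.sub_apply]
  abel

lemma ltsP_addsmul3 {k A : Type*} [Field k] [AddCommGroup A] [Module k A]
    (mul : A →ₗ[k] A →ₗ[k] A) (a b u v : A) :
    ltsP mul u v (a + (2 : ℤ) • b) = ltsP mul u v a + (2 : ℤ) • ltsP mul u v b := by
  simp only [ltsP, comm', two_smul, map_add, map_sub, LinearMap.add_apply,
    LinearMap.sub_apply]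
  abel

set_option maxHeartbeats 2000000 in
lemma ltsD_ltsP {k A : Type*} [Field k] [AddCommGroup A] [Module k A]
    (mul : A →ₗ[k] A →ₗ[k] A)
    (a12 : ∀ a b c : A, associator' mul a b c = - associator' mul b a c)
    (a23 : ∀ a b c : A, associator' mul a b c = - associator' mul a c b)
    (x y u v w : A) :
    ltsD mul x y (ltsP mul u v w)
      = ltsP mul (ltsD mul x y u) v w + ltsP mul u (ltsD mul x y v) w
        + ltsP mul u v (ltsD mul x y w) := by
  have l3s : ∀ a b : A, ltsD mul x y (a - b) = ltsD mul x y a - ltsD mul x y b := by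
    intro a b
    simp only [ltsD, map_sub, LinearMap.sub_apply]
    abel
  have l3a : ∀ a b : A, ltsD mul x y (a + b) = ltsD mul x y a + ltsD mul x y b := by
    intro a b
    simp only [ltsD, map_add, LinearMap.add_apply]
    abel
  simp only [ltsP, comm', two_smul, l3s, l3a, ltsD_leibniz mul a12 a23,
    map_add, map_sub, LinearMap.add_apply, LinearMap.sub_apply]
  abel

set_option maxHeartbeats 2000000 in
lemma ltsP_nambu {k A : Type*} [Field k] [AddCommGroup A] [Module k A]
    (mul : A →ₗ[k] A →ₗ[k] A)
    (a12 : ∀ a b c : A, associator' mul a b c = - associator' mul b a c)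
    (a23 : ∀ a b c : A, associator' mul a b c = - associator' mul a c b)
    (x y u v w : A) :
    ltsP mul x y (ltsP mul u v w)
      = ltsP mul (ltsP mul x y u) v w + ltsP mul u (ltsP mul x y v) w
        + ltsP mul u v (ltsP mul x y w) := by
  rw [ltsP_eq mul a12 a23 x y (ltsP mul u v w),
    ltsP_ad mul a12 a23 (comm' mul x y) u v w,
    ltsD_ltsP mul a12 a23 x y u v w,
    ltsP_eq mul a12 a23 x y u, ltsP_eq mul a12 a23 x y v, ltsP_eq mul a12 a23 x y w,
    ltsP_addsmul1, ltsP_addsmul2, ltsP_addsmul3]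
  simp only [smul_add]
  abel

lemma alpha_ltsP {k A : Type*} [Field k] [AddCommGroup A] [Module k A]
    (mul : A →ₗ[k] A →ₗ[k] A) (α : A →ₗ[k] A)
    (hα : ∀ x y : A, α (mul x y) = mul (α x) (α y)) (x y z : A) :
    α (ltsP mul x y z) = ltsP mul (α x) (α y) (α z) := by
  simp only [ltsP, comm', two_smul, map_add, map_sub, LinearMap.add_apply,
    LinearMap.sub_apply, hα]


/-- If `(A, mul)` is an alternative algebra (anti-symmetric
associator) and `α` is an algebra morphism, then `A⁻_α = (A, [·,·,·]_α, α)`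
with `[x,y,z]_α = α(2[[x,y],z] − [[z,x],y] − [[y,z],x])` is a multiplicative
Hom-Lie triple system. -/
theorem alternative_gives_homLie_triple_system
    {k A : Type*} [Field k] [CharZero k] [AddCommGroup A] [Module k A]
    (mul : A →ₗ[k] A →ₗ[k] A)
    (halt : ∀ (σ : Equiv.Perm (Fin 3)) (v : Fin 3 → A),
      associator' mul (v 0) (v 1) (v 2)
        = (Equiv.Perm.sign σ : ℤ) • associator' mul (v (σ 0)) (v (σ 1)) (v (σ 2)))
    (α : A →ₗ[k] A)
    (hα : ∀ x y : A, α (mul x y) = mul (α x) (α y)) :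
    -- left anti-symmetry
    (∀ u v w : A, commTripleTwist mul α u v w = - commTripleTwist mul α v u w) ∧
    -- the ternary Jacobi identity
    (∀ u v w : A,
      commTripleTwist mul α u v w + commTripleTwist mul α w u v
        + commTripleTwist mul α v w u = 0) ∧
    -- the ternary Hom-Nambu identity with both twisting maps equal to α
    (∀ u v w x y : A,
      commTripleTwist mul α (α x) (α y) (commTripleTwist mul α u v w)
        = commTripleTwist mul α (commTripleTwist mul α x y u) (α v) (α w)
          + commTripleTwist mul α (α u) (commTripleTwist mul α x y v) (α w)
          + commTripleTwist mul α (α u) (α v) (commTripleTwist mul α x y w)) ∧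
    -- multiplicativity
    (∀ x y z : A,
      α (commTripleTwist mul α x y z)
        = commTripleTwist mul α (α x) (α y) (α z)) := by
  have a12 := asw12 mul halt
  have a23 := asw23 mul halt
  have ctt : ∀ x y z : A, commTripleTwist mul α x y z = α (ltsP mul x y z) :=
    fun _ _ _ => rfl
  refine ⟨?_, ?_, ?_, ?_⟩
  · intro u v w
    rw [ctt, ctt, ltsP_antisym mul u v w, map_neg]
  · intro u v w
    simp only [ctt, ← map_add]
    rw [ltsP_jacobi mul u v w, map_zero]
  · intro u v w x y
    simp only [ctt]
    simp only [← alpha_ltsP mul α hα]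
    rw [ltsP_nambu mul a12 a23 x y u v w]
    simp only [map_add]
  · intro x y z
    simp only [ctt]
    exact congrArg α (alpha_ltsP mul α hα x y z)
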